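/- Let c be a complete history with a linearization witness Match. Then the induced enq-order ≪ (the transitive closure of ≪¹) is a partial order over Enq(c); equivalently, the relation ≪¹ admits no cycle e_1 ≪¹ e_2 ≪¹ … ≪¹ e_{k+1} = e_1. -/

import Mathlib

/-- Invocation and response actions of queue events. -/
inductive HAction : Type
  | invEnq : ℕ → ℕ → HAction
  | resEnq : ℕ → HAction
  | invDeq : ℕ → HAction
  | resDeq : ℕ → Option ℕ → HAction
  deriving DecidableEq

def HAction.uid : HAction → ℕ
  | HAction.invEnq u _ => u
  | HAction.resEnq u => u
  | HAction.invDeq u => u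
  | HAction.resDeq u _ => u

def HAction.isInv : HAction → Bool
  | HAction.invEnq _ _ => true
  | HAction.invDeq _ => true
  | _ => false

/-- Whether the action belongs to an enqueue method. -/
def HAction.isEnqM : HAction → Bool
  | HAction.invEnq _ _ => true
  | HAction.resEnq _ => true
  | _ => false

abbrev History := List HAction

/-- Enqueue events (identified by their uid) invoked in `c`. -/
def EnqSet (c : History) : Set ℕ := {u | ∃ x, HAction.invEnq u x ∈ c}

/-- Dequeue events (identified by their uid) invoked in `c`. -/
def DeqSet (c : History) : Set ℕ := {u | HAction.invDeq u ∈ c}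

/-- `u ≺_c u'`: the response of `u` occurs before the invocation of `u'` in `c`. -/
def HPrec (c : History) (u u' : ℕ) : Prop :=
  ∃ (i j : ℕ) (a a' : HAction), i < j ∧ (c)[i]? = some a ∧ a.isInv = false ∧ a.uid = u ∧
    (c)[j]? = some a' ∧ a'.isInv = true ∧ a'.uid = u'

/-- Event `u` is pending in `c`: invoked but not responded. -/
def Pending (c : History) (u : ℕ) : Prop :=
  (∃ a ∈ c, a.isInv = true ∧ a.uid = u) ∧ ¬(∃ a ∈ c, a.isInv = false ∧ a.uid = u)

/-- A history is complete if it has no pending events. -/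
def CompleteH (c : History) : Prop := ∀ u, ¬ Pending c u

/-- Well-formed history: unique invocations and responses per uid, and every
response is preceded by its matching invocation (same uid, same method). -/
structure WellFormed (c : History) : Prop where
  invNodup : ((c.filter (fun a => a.isInv)).map HAction.uid).Nodup
  resNodup : ((c.filter (fun a => !a.isInv)).map HAction.uid).Nodup
  resMatched : ∀ (j : ℕ) (a' : HAction), (c)[j]? = some a' → a'.isInv = false →
    ∃ (i : ℕ) (a : HAction), i < j ∧ (c)[i]? = some a ∧ a.isInv = true ∧ a.uid = a'.uid ∧ a.isEnqM = a'.isEnqM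

/-- A safe mapping for a complete history `c`. -/
structure SafeMapping (c : History) (M : ℕ → Option ℕ) : Prop where
  codom : ∀ d ∈ DeqSet c, ∀ e, M d = some e → e ∈ EnqSet c
  val : ∀ d ∈ DeqSet c, ∀ e, M d = some e →
        ∃ x, HAction.invEnq e x ∈ c ∧ HAction.resDeq d (some x) ∈ c
  null : ∀ d ∈ DeqSet c, (M d = none ↔ HAction.resDeq d none ∈ c)
  inj : ∀ d ∈ DeqSet c, ∀ d' ∈ DeqSet c, ∀ e, M d = some e → M d' = some e → d = d'

/-- An ordered mapping for a complete history `c`. -/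
structure OrderedMapping (c : History) (M : ℕ → Option ℕ)
    extends SafeMapping c M : Prop where
  notAfter : ∀ d ∈ DeqSet c, ∀ e, M d = some e → ¬ HPrec c d e
  fifo : ∀ e ∈ EnqSet c, ∀ d' ∈ DeqSet c, ∀ e', M d' = some e' → HPrec c e e' →
         ∃ d ∈ DeqSet c, M d = some e ∧ ¬ HPrec c d' d

/-- The least set `Bad(c, d⊥)` of enqueue events. -/
inductive Bad (c : History) (M : ℕ → Option ℕ) (dbot : ℕ) : ℕ → Prop
  | base (e : ℕ) : e ∈ EnqSet c →
      (HPrec c dbot e ∨ ∀ d ∈ DeqSet c, M d = some e → HPrec c dbot d) →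
      Bad c M dbot e
  | stepE (ei e : ℕ) : Bad c M dbot ei → e ∈ EnqSet c → HPrec c ei e →
      Bad c M dbot e
  | stepD (ei e d : ℕ) : Bad c M dbot ei → e ∈ EnqSet c → d ∈ DeqSet c →
      M d = some e → HPrec c ei d → Bad c M dbot e

/-- A linearization witness for a complete history `c`. -/
structure LinWitness (c : History) (M : ℕ → Option ℕ)
    extends OrderedMapping c M : Prop where
  wit : ∀ d ∈ DeqSet c, HAction.resDeq d none ∈ c →
        ∀ e, Bad c M d e → ¬ HPrec c e d

/-- Two events overlap if neither precedes the other. -/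
def Overlap (c : History) (u u' : ℕ) : Prop := ¬ HPrec c u u' ∧ ¬ HPrec c u' u

/-- The one-step enq-order `≪¹` induced by a linearization witness. -/
def LL1 (c : History) (M : ℕ → Option ℕ) (e1 e2 : ℕ) : Prop :=
  e1 ∈ EnqSet c ∧ e2 ∈ EnqSet c ∧ e1 ≠ e2 ∧
  (HPrec c e1 e2 ∨
   (Overlap c e1 e2 ∧ (∃ d1 ∈ DeqSet c, M d1 = some e1) ∧
      ¬ ∃ d2 ∈ DeqSet c, M d2 = some e2) ∨
   (Overlap c e1 e2 ∧ ∃ d1 ∈ DeqSet c, ∃ d2 ∈ DeqSet c,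
      M d1 = some e1 ∧ M d2 = some e2 ∧ HPrec c d1 d2) ∨
   (Overlap c e1 e2 ∧ (∃ d1 ∈ DeqSet c, M d1 = some e1) ∧
      (∃ d2 ∈ DeqSet c, M d2 = some e2) ∧
      ∃ d ∈ DeqSet c, HAction.resDeq d none ∈ c ∧ ¬ Bad c M d e1 ∧ Bad c M d e2))

/-! Bad sets are nested (interval orders have nested successor sets) and closed along `≪¹`, so a
cycle can contain no edge of kind (4). Every other edge is either an enqueue precedence or a
precedence between the matched dequeues, an unmatched enqueue counting as dequeued after every
dequeue. Both are strict orders; by 2+2-freeness of precedence a dequeue precedence followed by an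
enqueue precedence and another dequeue precedence is again a dequeue precedence, and FIFO forbids
a dequeue precedence opposite to an enqueue precedence. Such a union of two orders has no cycle. -/

namespace Relation

variable {α : Type*} {A B : α → α → Prop}

theorem not_transGen_or_self (hA : ∀ {a b c}, A a b → A b c → A a c) (hA' : ∀ a, ¬ A a a)
    (hB : ∀ {a b c d}, B a b → ReflGen A b c → B c d → B a d)
    (hBA : ∀ {a b}, B a b → ¬ ReflGen A b a) (x : α) :
    ¬ TransGen (fun a b => A a b ∨ B a b) x x := by
  have reflGen_trans : ∀ {a b c}, ReflGen A a b → ReflGen A b c → ReflGen A a c := by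
    rintro a b c (_ | hab) (_ | hbc)
    exacts [.refl, .single hbc, .single hab, .single (hA hab hbc)]
  have key : ∀ {a b}, TransGen (fun a b => A a b ∨ B a b) a b →
      A a b ∨ ∃ w w', ReflGen A a w ∧ B w w' ∧ ReflGen A w' b := by
    intro a b h
    induction h with
    | single h => exact h.imp id fun h => ⟨_, _, .refl, h, .refl⟩
    | tail _ hbc ih =>
      rcases ih, hbc with ⟨hab | ⟨w, w', haw, hww', hw'b⟩, hbc | hbc⟩
      · exact .inl (hA hab hbc)
      · exact .inr ⟨_, _, .single hab, hbc, .refl⟩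
      · exact .inr ⟨w, w', haw, hww', reflGen_trans hw'b (.single hbc)⟩
      · exact .inr ⟨w, _, haw, hB hww' hw'b hbc, .refl⟩
  intro h
  rcases key h with hxx | ⟨w, w', hxw, hww', hw'x⟩
  · exact hA' x hxx
  · exact hBA hww' (reflGen_trans hw'x hxw)

theorem transGen_self_of_cut {R Q : α → α → Prop} {ι : Type*} (P : ι → α → Prop)
    (hP : ∀ {i a b}, R a b → P i a → P i b)
    (hR : ∀ {a b}, R a b → Q a b ∨ ∃ i, ¬ P i a ∧ P i b)
    {x : α} (h : TransGen R x x) : TransGen Q x x := by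
  have path : ∀ {i a b}, TransGen R a b → P i a → P i b := by
    intro i a b h
    induction h with
    | single h => exact hP h
    | tail _ hbc ih => exact hP hbc ∘ ih
  have key : ∀ {a b}, TransGen R a b → TransGen Q a b ∨ ∃ i, ¬ P i a ∧ P i b := by
    intro a b h
    induction h with
    | single h => exact (hR h).imp .single id
    | @tail b c hab hbc ih =>
      rcases ih with hab' | ⟨i, hia, hib⟩
      · rcases hR hbc with hbc | ⟨i, hib, hic⟩
        · exact .inl (hab'.tail hbc)
        · exact .inr ⟨i, fun hia => hib (path hab hia), hic⟩
      · exact .inr ⟨i, hia, hP hbc hib⟩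
  exact (key h).resolve_right fun ⟨i, hi, hi'⟩ => hi hi'

end Relation

theorem List.index_eq_of_nodup_map_filter {α β : Type*} {l : List α} {p : α → Bool}
    {f : α → β} (h : ((l.filter p).map f).Nodup) {i j : ℕ} {a b : α} (hi : l[i]? = some a)
    (hj : l[j]? = some b) (ha : p a) (hb : p b) (hab : f a = f b) : i = j := by
  have hpw := List.pairwise_iff_getElem.mp (List.pairwise_filter.mp (List.pairwise_map.mp h))
  obtain ⟨hil, rfl⟩ := List.getElem?_eq_some_iff.mp hi
  obtain ⟨hjl, rfl⟩ := List.getElem?_eq_some_iff.mp hj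
  rcases lt_trichotomy i j with hij | hij | hij
  exacts [absurd hab (hpw i j hil hjl hij ha hb), hij, absurd hab.symm (hpw j i hjl hil hij hb ha)]

section Precedence

variable {c : History}

theorem WellFormed.inv_lt_res (hwf : WellFormed c) {i j : ℕ} {a b : HAction}
    (ha : (c)[i]? = some a) (ha' : a.isInv = true) (hb : (c)[j]? = some b) (hb' : b.isInv = false)
    (hab : a.uid = b.uid) : i < j := by
  obtain ⟨k, a₀, hkj, ha₀, ha₀', ha₀b, -⟩ := hwf.resMatched j b hb hb'
  have : i = k := List.index_eq_of_nodup_map_filter hwf.invNodup ha ha₀ ha' ha₀' (hab ▸ ha₀b.symm)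
  omega

theorem HPrec.trans (hwf : WellFormed c) {u v w : ℕ} (huv : HPrec c u v) (hvw : HPrec c v w) :
    HPrec c u w := by
  obtain ⟨i, j, a, a', hij, ha, ha₁, ha₂, ha', ha'₁, ha'₂⟩ := huv
  obtain ⟨k, l, b, b', hkl, hb, hb₁, hb₂, hb', hb'₁, hb'₂⟩ := hvw
  have := hwf.inv_lt_res ha' ha'₁ hb hb₁ (ha'₂.trans hb₂.symm)
  exact ⟨i, l, a, b', by omega, ha, ha₁, ha₂, hb', hb'₁, hb'₂⟩

theorem HPrec.irrefl (hwf : WellFormed c) (u : ℕ) : ¬ HPrec c u u := by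
  rintro ⟨i, j, a, a', hij, ha, ha₁, ha₂, ha', ha'₁, ha'₂⟩
  have := hwf.inv_lt_res ha' ha'₁ ha ha₁ (ha'₂.trans ha₂.symm)
  omega

theorem HPrec.cross {a b x y : ℕ} (hab : HPrec c a b) (hxy : HPrec c x y) :
    HPrec c a y ∨ HPrec c x b := by
  obtain ⟨i, j, a₁, a₂, hij, h₁, h₂, h₃, h₄, h₅, h₆⟩ := hab
  obtain ⟨k, l, b₁, b₂, hkl, g₁, g₂, g₃, g₄, g₅, g₆⟩ := hxy
  rcases lt_or_ge i l with hil | hli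
  · exact .inl ⟨i, l, a₁, b₂, hil, h₁, h₂, h₃, g₄, g₅, g₆⟩
  · exact .inr ⟨k, j, b₁, a₂, by omega, g₁, g₂, g₃, h₄, h₅, h₆⟩

theorem HPrec.succ_subset_total (d d' : ℕ) :
    (∀ x, HPrec c d' x → HPrec c d x) ∨ (∀ x, HPrec c d x → HPrec c d' x) := by
  by_contra! ⟨⟨x, hd'x, hdx⟩, ⟨y, hdy, hd'y⟩⟩
  rcases hd'x.cross hdy with h | h
  exacts [hd'y h, hdx h]

end Precedence

section Bad

variable {c : History} {M : ℕ → Option ℕ}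

theorem Bad.mono {d d' e : ℕ} (hdd' : ∀ x, HPrec c d' x → HPrec c d x) (h : Bad c M d' e) :
    Bad c M d e := by
  induction h with
  | base e he h => exact .base e he (h.imp (hdd' e) fun h d₁ hd₁ hm₁ => hdd' d₁ (h d₁ hd₁ hm₁))
  | stepE ei e _ he hp ih => exact .stepE ei e ih he hp
  | stepD ei e d₁ _ he hd₁ hm₁ hp ih => exact .stepD ei e d₁ ih he hd₁ hm₁ hp

theorem Bad.of_not_bad {d₀ d u e : ℕ} (hu : Bad c M d₀ u) (hu' : ¬ Bad c M d u)
    (he : Bad c M d e) : Bad c M d₀ e := by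
  rcases HPrec.succ_subset_total d₀ d with h | h
  exacts [he.mono h, absurd (hu.mono h) hu']

theorem Bad.of_unmatched {d₀ e : ℕ} (he : e ∈ EnqSet c) (hm : ¬ ∃ d ∈ DeqSet c, M d = some e) :
    Bad c M d₀ e :=
  .base e he (.inr fun d hd hmd => absurd ⟨d, hd, hmd⟩ hm)

theorem Bad.of_prec_deq (hM : SafeMapping c M) {d₀ e d : ℕ} (he : e ∈ EnqSet c)
    (hd : d ∈ DeqSet c) (hmd : M d = some e) (h : HPrec c d₀ d) : Bad c M d₀ e :=
  .base e he (.inr fun d' hd' hmd' => hM.inj d hd d' hd' e hmd hmd' ▸ h)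

end Bad

section Orders

variable {c : History} {M : ℕ → Option ℕ}

def EnqPrec (c : History) (u v : ℕ) : Prop := u ∈ EnqSet c ∧ HPrec c u v

/-- An unmatched `v` counts as dequeued after every dequeue. -/
def DeqPrec (c : History) (M : ℕ → Option ℕ) (u v : ℕ) : Prop :=
  (∃ d ∈ DeqSet c, M d = some u) ∧
    ∀ d₁ ∈ DeqSet c, M d₁ = some u → ∀ d₂ ∈ DeqSet c, M d₂ = some v → HPrec c d₁ d₂

theorem EnqPrec.trans (hwf : WellFormed c) {u v w : ℕ} (huv : EnqPrec c u v)
    (hvw : EnqPrec c v w) : EnqPrec c u w :=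
  ⟨huv.1, huv.2.trans hwf hvw.2⟩

theorem EnqPrec.irrefl (hwf : WellFormed c) (u : ℕ) : ¬ EnqPrec c u u :=
  fun h => HPrec.irrefl hwf u h.2

theorem OrderedMapping.exists_deq_not_prec (hwf : WellFormed c) (hM : OrderedMapping c M)
    {b e d : ℕ} (hbe : Relation.ReflGen (EnqPrec c) b e) (hd : d ∈ DeqSet c)
    (hmd : M d = some e) : ∃ d' ∈ DeqSet c, M d' = some b ∧ ¬ HPrec c d d' := by
  rcases hbe with _ | ⟨hb, hbe⟩
  · exact ⟨d, hd, hmd, HPrec.irrefl hwf d⟩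
  · exact hM.fifo b hb d hd e hmd hbe

theorem DeqPrec.trans_reflGen (hwf : WellFormed c) (hM : OrderedMapping c M) {a b e f : ℕ}
    (hab : DeqPrec c M a b) (hbe : Relation.ReflGen (EnqPrec c) b e) (hef : DeqPrec c M e f) :
    DeqPrec c M a f := by
  refine ⟨hab.1, fun da hda hma df hdf hmf => ?_⟩
  obtain ⟨de, hde, hme⟩ := hef.1
  obtain ⟨db, hdb, hmb, hedb⟩ := hM.exists_deq_not_prec hwf hbe hde hme
  exact ((hab.2 da hda hma db hdb hmb).cross (hef.2 de hde hme df hdf hmf)).resolve_right hedb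

theorem DeqPrec.not_reflGen (hwf : WellFormed c) (hM : OrderedMapping c M) {a b : ℕ}
    (hab : DeqPrec c M a b) : ¬ Relation.ReflGen (EnqPrec c) b a := by
  intro hba
  obtain ⟨da, hda, hma⟩ := hab.1
  obtain ⟨db, hdb, hmb, hadb⟩ := hM.exists_deq_not_prec hwf hba hda hma
  exact hadb (hab.2 da hda hma db hdb hmb)

theorem Bad.of_deqPrec (hwf : WellFormed c) (hM : OrderedMapping c M) {d₀ u v : ℕ}
    (hu : Bad c M d₀ u) (huv : DeqPrec c M u v) (hv : v ∈ EnqSet c) : Bad c M d₀ v := by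
  by_cases hvm : ∃ dv ∈ DeqSet c, M dv = some v
  swap
  · exact .of_unmatched hv hvm
  obtain ⟨dv, hdv, hmv⟩ := hvm
  obtain ⟨du, hdu, hmu⟩ := huv.1
  -- the dequeue of `u` does not precede `u`, so whatever precedes `u` precedes `dv`
  have of_prec_enq : ∀ x, HPrec c x u → HPrec c x dv := fun x hx =>
    (hx.cross (huv.2 du hdu hmu dv hdv hmv)).resolve_right (hM.notAfter du hdu u hmu)
  have of_prec_deq : ∀ x d, d ∈ DeqSet c → M d = some u → HPrec c x d → HPrec c x dv :=
    fun x d hd hmd hx => hx.trans hwf (huv.2 d hd hmd dv hdv hmv)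
  cases hu with
  | base _ _ h =>
    refine .of_prec_deq hM.toSafeMapping hv hdv hmv ?_
    rcases h with h | h
    exacts [of_prec_enq d₀ h, of_prec_deq d₀ du hdu hmu (h du hdu hmu)]
  | stepE ei _ hei _ h => exact .stepD ei v dv hei hv hdv hmv (of_prec_enq ei h)
  | stepD ei _ d hei _ hd hmd h => exact .stepD ei v dv hei hv hdv hmv (of_prec_deq ei d hd hmd h)

end Orders

section LL1

variable {c : History} {M : ℕ → Option ℕ}

theorem LL1.enqPrec_or_deqPrec_or_cut (hM : SafeMapping c M) {u v : ℕ} (h : LL1 c M u v) :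
    (EnqPrec c u v ∨ DeqPrec c M u v) ∨ ∃ d, ¬ Bad c M d u ∧ Bad c M d v := by
  obtain ⟨hu, -, -, hp | ⟨-, hum, hvm⟩ | ⟨-, d₁, hd₁, d₂, hd₂, hm₁, hm₂, hp⟩ |
    ⟨-, -, -, d, -, -, hdu, hdv⟩⟩ := h
  · exact .inl (.inl ⟨hu, hp⟩)
  · exact .inl (.inr ⟨hum, fun _ _ _ d₂ hd₂ hm₂ => absurd ⟨d₂, hd₂, hm₂⟩ hvm⟩)
  · refine .inl (.inr ⟨⟨d₁, hd₁, hm₁⟩, fun d₁' hd₁' hm₁' d₂' hd₂' hm₂' => ?_⟩)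
    rwa [hM.inj d₁' hd₁' d₁ hd₁ u hm₁' hm₁, hM.inj d₂' hd₂' d₂ hd₂ v hm₂' hm₂]
  · exact .inr ⟨d, hdu, hdv⟩

theorem LL1.bad (hwf : WellFormed c) (hM : OrderedMapping c M) {d u v : ℕ} (h : LL1 c M u v)
    (hu : Bad c M d u) : Bad c M d v := by
  rcases h.enqPrec_or_deqPrec_or_cut hM.toSafeMapping with (huv | huv) | ⟨d', hd'u, hd'v⟩
  · exact .stepE u v hu h.2.1 huv.2
  · exact hu.of_deqPrec hwf hM huv h.2.1
  · exact hu.of_not_bad hd'u hd'v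

end LL1

theorem enq_order_partial_general (c : History) (M : ℕ → Option ℕ)
    (hwf : WellFormed c) (hM : LinWitness c M) :
    ∀ e : ℕ, ¬ Relation.TransGen (LL1 c M) e e := by
  intro e he
  have hM := hM.toOrderedMapping
  have hcyc : Relation.TransGen (fun u v => EnqPrec c u v ∨ DeqPrec c M u v) e e :=
    Relation.transGen_self_of_cut (Bad c M) (fun huv => huv.bad hwf hM)
      (fun huv => huv.enqPrec_or_deqPrec_or_cut hM.toSafeMapping) he
  exact Relation.not_transGen_or_self (A := EnqPrec c) (EnqPrec.trans hwf) (EnqPrec.irrefl hwf)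
    (DeqPrec.trans_reflGen hwf hM) (DeqPrec.not_reflGen hwf hM) e hcyc

/-- The enq-order (the transitive closure of `≪¹`) is a (strict) partial order:
`≪¹` admits no cycle. -/
theorem enq_order_partial (c : History) (M : ℕ → Option ℕ)
    (hwf : WellFormed c) (hcomp : CompleteH c) (hM : LinWitness c M) :
    ∀ e : ℕ, ¬ Relation.TransGen (LL1 c M) e e :=
  enq_order_partial_general c M hwf hM
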